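/- Suppose a coded polynomial aggregation scheme satisfies D(β_n) = F(E(β_n)) for all n ∈ 𝒩 where |𝒩| = N-S, deg D ≤ N-S-1, deg E ≤ K-1, deg F ≤ d, and the orthogonality conditions ∑_{k=0}^{K-1} w_k P_𝒩(α_k) α_k^j = 0 hold for all j = 0, ..., d(K-1)+S-N, where P_𝒩(z) = ∏_{n∈𝒩}(z-β_n) and α_0,...,α_{K-1}, β_n are all distinct. Then ∑_{k=0}^{K-1} w_k D(α_k) = ∑_{k=0}^{K-1} w_k F(E(α_k)). -/

import Mathlib

/-!
The defect `G = F ∘ E - D` has degree at most `d(K-1)` and vanishes at every `β n`, so it is the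
node polynomial `P_𝒩` times a quotient `Q` of degree at most `d(K-1) - (N-S)`. Expanding `Q` in
monomials, `∑ₖ wₖ G(αₖ) = ∑ⱼ Q_j ∑ₖ wₖ P_𝒩(αₖ) αₖ^j`, and every inner sum vanishes by the
orthogonality conditions.
-/

open Polynomial Finset

theorem Lagrange.nodal_dvd_of_eval_eq_zero {F ι : Type*} [Field F] {s : Finset ι} {v : ι → F}
    (hvs : Set.InjOn v s) {p : F[X]} (hp : ∀ i ∈ s, p.eval (v i) = 0) : nodal s v ∣ p := by
  refine Finset.prod_dvd_of_coprime (fun i hi j hj hij => ?_) fun i hi => dvd_iff_isRoot.2 (hp i hi)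
  exact isCoprime_X_sub_C_of_isUnit_sub (sub_ne_zero.2 fun h => hij (hvs hi hj h)).isUnit

theorem Polynomial.sum_mul_eval_eq_zero_of_moments_eq_zero {R κ : Type*} [CommSemiring R]
    {t : Finset κ} {c x : κ → R} {m : ℕ} (hmom : ∀ j < m, ∑ k ∈ t, c k * x k ^ j = 0)
    {q : R[X]} (hq : q.natDegree < m) : ∑ k ∈ t, c k * q.eval (x k) = 0 := by
  calc ∑ k ∈ t, c k * q.eval (x k)
      = ∑ j ∈ range m, q.coeff j * ∑ k ∈ t, c k * x k ^ j := by
        simp only [eval_eq_sum_range' hq, mul_sum, sum_comm (s := t)]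
        exact sum_congr rfl fun _ _ => sum_congr rfl fun _ _ => by ring
    _ = 0 := sum_eq_zero fun j hj => by rw [hmom j (mem_range.1 hj), mul_zero]

theorem Lagrange.sum_mul_eval_eq_zero_of_eval_nodes_eq_zero {F ι κ : Type*} [Field F]
    {s : Finset ι} {v : ι → F} (hvs : Set.InjOn v s) {t : Finset κ} {c x : κ → F} {n : ℕ}
    (horth : ∀ j < n + 1 - #s, ∑ k ∈ t, c k * (nodal s v).eval (x k) * x k ^ j = 0)
    {p : F[X]} (hp : p.natDegree ≤ n) (hnodes : ∀ i ∈ s, p.eval (v i) = 0) :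
    ∑ k ∈ t, c k * p.eval (x k) = 0 := by
  obtain ⟨q, rfl⟩ := nodal_dvd_of_eval_eq_zero hvs hnodes
  rcases eq_or_ne q 0 with rfl | hq0
  · simp
  rw [nodal_monic.natDegree_mul' hq0, natDegree_nodal] at hp
  have hq : q.natDegree < n + 1 - #s := by omega
  simpa only [eval_mul, mul_assoc] using sum_mul_eval_eq_zero_of_moments_eq_zero horth hq

theorem stmt_12_general {ι : Type*} (K d S N : ℕ) (hN2 : N ≤ d * (K - 1) + S)
    (α : Fin K → ℂ)
    (w : Fin K → ℂ)
    (𝒩 : Finset ι) (hcard : 𝒩.card = N - S)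
    (β : ι → ℂ) (hβ : Set.InjOn β 𝒩)
    (E F D : ℂ[X]) (hE : E.natDegree ≤ K - 1) (hF : F.natDegree ≤ d)
    (hD : D.natDegree ≤ N - S - 1)
    (hinterp : ∀ n ∈ 𝒩, D.eval (β n) = F.eval (E.eval (β n)))
    (horth : ∀ j < d * (K - 1) + S + 1 - N,
      ∑ k, w k * (∏ n ∈ 𝒩, (X - C (β n))).eval (α k) * α k ^ j = 0) :
    ∑ k, w k * D.eval (α k) = ∑ k, w k * F.eval (E.eval (α k)) := by
  have hdeg : (F.comp E - D).natDegree ≤ d * (K - 1) := by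
    refine (natDegree_sub_le _ _).trans (max_le ?_ (hD.trans (by omega)))
    exact natDegree_comp.trans_le (Nat.mul_le_mul hF hE)
  have hdefect : ∑ k, w k * (F.comp E - D).eval (α k) = 0 :=
    Lagrange.sum_mul_eval_eq_zero_of_eval_nodes_eq_zero hβ
      (fun j hj => horth j (by omega)) hdeg
      (fun n hn => by rw [eval_sub, eval_comp, hinterp n hn, sub_self])
  simp only [eval_sub, eval_comp, mul_sub, sum_sub_distrib] at hdefect
  exact (sub_eq_zero.1 hdefect).symm

theorem stmt_12 {ι : Type*} (K d S N : ℕ) (hK : 0 < K) (hd : 0 < d)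
    (hS : 0 < S) (hN1 : S + 2 ≤ N) (hN2 : N ≤ d * (K - 1) + S)
    (α : Fin K → ℂ) (hα : Function.Injective α)
    (w : Fin K → ℂ)
    (𝒩 : Finset ι) (hcard : 𝒩.card = N - S)
    (β : ι → ℂ) (hβ : Set.InjOn β 𝒩)
    (hdisj : ∀ n ∈ 𝒩, ∀ k, β n ≠ α k)
    (E F D : ℂ[X]) (hE : E.natDegree ≤ K - 1) (hF : F.natDegree ≤ d)
    (hD : D.natDegree ≤ N - S - 1)
    (hinterp : ∀ n ∈ 𝒩, D.eval (β n) = F.eval (E.eval (β n)))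
    (horth : ∀ j < d * (K - 1) + S + 1 - N,
      ∑ k, w k * (∏ n ∈ 𝒩, (X - C (β n))).eval (α k) * α k ^ j = 0) :
    ∑ k, w k * D.eval (α k) = ∑ k, w k * F.eval (E.eval (α k)) :=
  stmt_12_general K d S N hN2 α w 𝒩 hcard β hβ E F D hE hF hD hinterp horth
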